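/- Fix reals γ > 0, θ > 0. For a nonzero integer m set β := 2πm/θ and define Θ_m(c, c') := 4γ (4γ + iβ)^{−1} · { 1 + 2 (4γ + iβ)^{−1} [c + c' + (2γ + iβ)(iβ/2)]^{−1} ( [2(2γ + iβ)]^{−1} (c − c')² + (iβ/2)(c + c') ) }^{−1}. Then for every nonzero integer m and all reals c, c' ≥ 0, all the denominators appearing in the definition of Θ_m(c, c') are nonzero (so Θ_m(c, c') is well defined) and 1 − Θ_m(c, c') ≠ 0. -/

import Mathlib

/-! Clearing denominators, both `{…} = 0` and `1 - Θ_m = 0` become complex polynomial equations in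
`γ`, `β`, `s = c + c'` and `d = c - c'`. Their imaginary parts are `γβ` times a linear function of
`s`, so they fix `s` in terms of `β²` and `γ²`; the real parts then force `d²` to a value strictly
larger than `s²`, which is impossible because `|c - c'| ≤ c + c'` for `c, c' ≥ 0`. -/

open Real

noncomputable section

/-- The `m`-th time-Fourier symbol `Θ_m(c, c')` of the memory kernel, with `β = 2πm/θ`. -/
def thetaM (γ θ : ℝ) (m : ℤ) (c c' : ℝ) : ℂ :=
  let β : ℂ := ((2 * π * m / θ : ℝ) : ℂ)
  (4 * (γ : ℂ)) * (4 * (γ : ℂ) + Complex.I * β)⁻¹ *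
    (1 + 2 * (4 * (γ : ℂ) + Complex.I * β)⁻¹ *
        ((c : ℂ) + (c' : ℂ) + (2 * (γ : ℂ) + Complex.I * β) * (Complex.I * β / 2))⁻¹ *
        ((2 * (2 * (γ : ℂ) + Complex.I * β))⁻¹ * ((c : ℂ) - (c' : ℂ)) ^ 2
          + (Complex.I * β / 2) * ((c : ℂ) + (c' : ℂ))))⁻¹

open Complex

lemma ofReal_add_ofReal_mul_I_eq_zero_iff {x y : ℝ} : (x : ℂ) + y * I = 0 ↔ x = 0 ∧ y = 0 := by
  simp [Complex.ext_iff]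

lemma add_I_mul_ofReal_ne_zero {z : ℂ} (hz : z.re ≠ 0) (β : ℝ) : z + I * β ≠ 0 :=
  fun h => hz (by simpa using congrArg re h)

lemma sub_sq_le_add_sq {c c' : ℝ} (hc : 0 ≤ c) (hc' : 0 ≤ c') : (c - c') ^ 2 ≤ (c + c') ^ 2 := by
  nlinarith [mul_nonneg hc hc']

def thetaDenom (γ β c c' : ℝ) : ℂ :=
  (c : ℂ) + (c' : ℂ) + (2 * (γ : ℂ) + I * β) * (I * β / 2)

/-- The braced factor of `Θ_m`: `thetaM γ θ m c c' = 4γ (4γ + iβ)⁻¹ (thetaBrace γ β c c')⁻¹`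
for `β = 2πm/θ`. -/
def thetaBrace (γ β c c' : ℝ) : ℂ :=
  1 + 2 * (4 * (γ : ℂ) + I * β)⁻¹ * (thetaDenom γ β c c')⁻¹ *
    ((2 * (2 * (γ : ℂ) + I * β))⁻¹ * ((c : ℂ) - (c' : ℂ)) ^ 2 + (I * β / 2) * ((c : ℂ) + (c' : ℂ)))

section

variable {γ β c c' : ℝ}

lemma thetaDenom_eq :
    thetaDenom γ β c c' = ((c + c' - β ^ 2 / 2 : ℝ) : ℂ) + (γ * β : ℝ) * I := by
  rw [thetaDenom]
  push_cast
  linear_combination (β : ℂ) ^ 2 / 2 * I_sq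

lemma thetaDenom_ne_zero (hγ : γ ≠ 0) (hβ : β ≠ 0) : thetaDenom γ β c c' ≠ 0 := by
  rw [thetaDenom_eq, Ne, ofReal_add_ofReal_mul_I_eq_zero_iff]
  exact fun h => mul_ne_zero hγ hβ h.2

lemma mul_thetaBrace (hγ : γ ≠ 0) (hβ : β ≠ 0) :
    (4 * (γ : ℂ) + I * β) * (2 * (γ : ℂ) + I * β) * thetaDenom γ β c c' * thetaBrace γ β c c' =
      (4 * (γ : ℂ) + I * β) * (2 * (γ : ℂ) + I * β) * thetaDenom γ β c c'
        + ((c : ℂ) - c') ^ 2 + I * β * (c + c') * (2 * (γ : ℂ) + I * β) := by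
  have hA : 4 * (γ : ℂ) + I * β ≠ 0 := add_I_mul_ofReal_ne_zero (by simpa using hγ) β
  have hB : 2 * (γ : ℂ) + I * β ≠ 0 := add_I_mul_ofReal_ne_zero (by simpa using hγ) β
  have hD := thetaDenom_ne_zero (c := c) (c' := c') hγ hβ
  rw [thetaBrace]
  generalize 4 * (γ : ℂ) + I * β = A at hA ⊢
  generalize 2 * (γ : ℂ) + I * β = B at hB ⊢
  generalize thetaDenom γ β c c' = D at hD ⊢
  field_simp
  ring

lemma mul_thetaBrace_eq (hγ : γ ≠ 0) (hβ : β ≠ 0) :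
    (4 * (γ : ℂ) + I * β) * (2 * (γ : ℂ) + I * β) * thetaDenom γ β c c' * thetaBrace γ β c c' =
      (((c + c') * (8 * γ ^ 2 - 2 * β ^ 2) - 10 * γ ^ 2 * β ^ 2 + β ^ 4 / 2 + (c - c') ^ 2 : ℝ) : ℂ)
        + (4 * γ * β * (2 * (c + c') + 2 * γ ^ 2 - β ^ 2) : ℝ) * I := by
  rw [mul_thetaBrace hγ hβ, thetaDenom_eq]
  push_cast
  linear_combination (6 * (γ : ℂ) ^ 2 * β ^ 2 + 2 * β ^ 2 * (c + c') - β ^ 4 / 2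
    + γ * β ^ 3 * I) * I_sq

lemma mul_thetaBrace_mul_sub_eq (hγ : γ ≠ 0) (hβ : β ≠ 0) :
    (2 * (γ : ℂ) + I * β) * thetaDenom γ β c c' *
        (thetaBrace γ β c c' * (4 * (γ : ℂ) + I * β) - 4 * γ) =
      (((c - c') ^ 2 - 2 * β ^ 2 * (c + c') - β ^ 2 * (4 * γ ^ 2 - β ^ 2) / 2 : ℝ) : ℂ)
        + (4 * γ * β * (c + c' - β ^ 2 / 2) : ℝ) * I := by
  have h := mul_thetaBrace_eq (c := c) (c' := c') hγ hβ
  rw [thetaDenom_eq] at h ⊢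
  push_cast at h ⊢
  linear_combination h - 4 * (γ : ℂ) ^ 2 * β ^ 2 * I_sq

lemma thetaBrace_ne_zero (hγ : γ ≠ 0) (hβ : β ≠ 0) (hc : 0 ≤ c) (hc' : 0 ≤ c') :
    thetaBrace γ β c c' ≠ 0 := by
  intro hE
  have hP := mul_thetaBrace_eq (c := c) (c' := c') hγ hβ
  rw [hE, mul_zero, eq_comm, ofReal_add_ofReal_mul_I_eq_zero_iff] at hP
  obtain ⟨hre, him⟩ := hP
  have hs : c + c' = β ^ 2 / 2 - γ ^ 2 := by
    have : 2 * (c + c') + 2 * γ ^ 2 - β ^ 2 = 0 := by simpa [hγ, hβ] using him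
    linarith
  have hd : (c - c') ^ 2 = β ^ 4 / 2 + 4 * γ ^ 2 * β ^ 2 + 8 * γ ^ 4 := by
    rw [hs] at hre
    linarith
  nlinarith [sub_sq_le_add_sq hc hc', pow_pos (sq_pos_of_ne_zero hγ) 2, sq_nonneg β]

lemma one_sub_mul_inv_thetaBrace_ne_zero (hγ : γ ≠ 0) (hβ : β ≠ 0) (hc : 0 ≤ c) (hc' : 0 ≤ c') :
    1 - 4 * (γ : ℂ) * (4 * (γ : ℂ) + I * β)⁻¹ * (thetaBrace γ β c c')⁻¹ ≠ 0 := by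
  have hA : 4 * (γ : ℂ) + I * β ≠ 0 := add_I_mul_ofReal_ne_zero (by simpa using hγ) β
  intro h
  rw [sub_eq_zero, eq_comm, mul_inv_eq_one₀ (thetaBrace_ne_zero hγ hβ hc hc'), eq_comm,
    eq_mul_inv_iff_mul_eq₀ hA] at h
  have hQ := mul_thetaBrace_mul_sub_eq (c := c) (c' := c') hγ hβ
  rw [h, sub_self, mul_zero, eq_comm, ofReal_add_ofReal_mul_I_eq_zero_iff] at hQ
  obtain ⟨hre, him⟩ := hQ
  have hs : c + c' = β ^ 2 / 2 := by
    have : c + c' - β ^ 2 / 2 = 0 := by simpa [hγ, hβ] using him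
    linarith
  have hd : (c - c') ^ 2 = β ^ 4 / 2 + 2 * γ ^ 2 * β ^ 2 := by
    rw [hs] at hre
    linarith
  nlinarith [sub_sq_le_add_sq hc hc', pow_pos (sq_pos_of_ne_zero hβ) 2, sq_nonneg (γ * β)]

end

/-- For every nonzero integer `m` and all `c, c' ≥ 0`, all denominators in
the definition of `Θ_m(c, c')` are nonzero (so `Θ_m(c, c')` is well defined), and moreover
`1 − Θ_m(c, c') ≠ 0`. -/
theorem one_sub_thetaM_ne_zero (γ θ : ℝ) (hγ : 0 < γ) (hθ : 0 < θ)
    (m : ℤ) (hm : m ≠ 0) (c c' : ℝ) (hc : 0 ≤ c) (hc' : 0 ≤ c') :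
    (4 * (γ : ℂ) + Complex.I * ((2 * π * m / θ : ℝ) : ℂ) ≠ 0)
    ∧ (2 * (2 * (γ : ℂ) + Complex.I * ((2 * π * m / θ : ℝ) : ℂ)) ≠ 0)
    ∧ ((c : ℂ) + (c' : ℂ)
        + (2 * (γ : ℂ) + Complex.I * ((2 * π * m / θ : ℝ) : ℂ)) *
            (Complex.I * ((2 * π * m / θ : ℝ) : ℂ) / 2) ≠ 0)
    ∧ (1 + 2 * (4 * (γ : ℂ) + Complex.I * ((2 * π * m / θ : ℝ) : ℂ))⁻¹ *
          ((c : ℂ) + (c' : ℂ)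
            + (2 * (γ : ℂ) + Complex.I * ((2 * π * m / θ : ℝ) : ℂ)) *
                (Complex.I * ((2 * π * m / θ : ℝ) : ℂ) / 2))⁻¹ *
          ((2 * (2 * (γ : ℂ) + Complex.I * ((2 * π * m / θ : ℝ) : ℂ)))⁻¹ *
              ((c : ℂ) - (c' : ℂ)) ^ 2
            + (Complex.I * ((2 * π * m / θ : ℝ) : ℂ) / 2) * ((c : ℂ) + (c' : ℂ))) ≠ 0)
    ∧ 1 - thetaM γ θ m c c' ≠ 0 := by
  have hβ : 2 * π * m / θ ≠ 0 :=
    div_ne_zero (mul_ne_zero (by positivity) (Int.cast_ne_zero.mpr hm)) hθ.ne'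
  have hA : (4 * (γ : ℂ)).re ≠ 0 := by simpa using hγ.ne'
  have hB : (2 * (γ : ℂ)).re ≠ 0 := by simpa using hγ.ne'
  exact ⟨add_I_mul_ofReal_ne_zero hA _, mul_ne_zero two_ne_zero (add_I_mul_ofReal_ne_zero hB _),
    thetaDenom_ne_zero hγ.ne' hβ, thetaBrace_ne_zero hγ.ne' hβ hc hc',
    one_sub_mul_inv_thetaBrace_ne_zero hγ.ne' hβ hc hc'⟩

end
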